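/- arXiv:2412.07330 — 8 statements merged into one kernel-verified Lean document; each statement's English description precedes it below -/
import Mathlib

section
/- Let g₂, g₃, x, y, z, x', y', z' ∈ ℂ satisfy x'² = 4x³ − g₂x − g₃, y'² = 4y³ − g₂y − g₃, z'² = 4z³ − g₂z − g₃, with x, y, z pairwise distinct, and set A = (x'−y')/(x−y), B = (xy'−yx')/(x−y); assume z' = Az + B. Then as polynomials in ξ one has 4ξ³ − g₂ξ − g₃ − (Aξ+B)² = 4(ξ−x)(ξ−y)(ξ−z), and in particular the Vieta relations hold: x+y+z = A²/4, xy+yz+zx + g₂/4 = −AB/2, and xyz − g₃/4 = B²/4. -/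
/-!
Each of `x, y, z` lies on the line `ξ' = Aξ + B` (for `x` and `y` this is what `A` and `B` are), so
substituting the line into the curve shows that `x, y, z` are three distinct roots of the cubic
`4ξ³ − g₂ξ − g₃ − (Aξ + B)²`, whose leading coefficient is `4`. The three roots determine its
remaining coefficients, which is the Vieta system, and the factorisation follows.
-/

theorem cubic_vieta_of_roots {R : Type*} [CommRing R] [IsDomain R] {a b c d x y z : R}
    (hxy : x ≠ y) (hxz : x ≠ z) (hyz : y ≠ z)
    (hx : a * x ^ 3 + b * x ^ 2 + c * x + d = 0)
    (hy : a * y ^ 3 + b * y ^ 2 + c * y + d = 0)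
    (hz : a * z ^ 3 + b * z ^ 2 + c * z + d = 0) :
    b = -a * (x + y + z) ∧ c = a * (x * y + y * z + z * x) ∧ d = -a * (x * y * z) := by
  -- divided differences of the cubic, cancelling the nonzero factors `x - y`, `x - z`, `y - z`
  have hxy₁ : a * (x ^ 2 + x * y + y ^ 2) + b * (x + y) + c = 0 := by
    refine (mul_eq_zero.1 ?_).resolve_left (sub_ne_zero.2 hxy)
    linear_combination hx - hy
  have hxz₁ : a * (x ^ 2 + x * z + z ^ 2) + b * (x + z) + c = 0 := by
    refine (mul_eq_zero.1 ?_).resolve_left (sub_ne_zero.2 hxz)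
    linear_combination hx - hz
  have hb : a * (x + y + z) + b = 0 := by
    refine (mul_eq_zero.1 ?_).resolve_left (sub_ne_zero.2 hyz)
    linear_combination hxy₁ - hxz₁
  have hc : c = a * (x * y + y * z + z * x) := by
    linear_combination hxy₁ - (x + y) * hb
  refine ⟨by linear_combination hb, hc, ?_⟩
  linear_combination hx - x ^ 2 * hb - x * hc

section Secant

variable {K : Type*} [Field K] {x y : K}

theorem secant_eval_left (h : x ≠ y) (x' y' : K) :
    (x' - y') / (x - y) * x + (x * y' - y * x') / (x - y) = x' := by
  field_simp [sub_ne_zero.2 h]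
  ring

theorem secant_eval_right (h : x ≠ y) (x' y' : K) :
    (x' - y') / (x - y) * y + (x * y' - y * x') / (x - y) = y' := by
  field_simp [sub_ne_zero.2 h]
  ring

end Secant

/-- Under the Burnside collinearity condition, the cubic
`4ξ³ − g₂ξ − g₃ − (Aξ+B)²` factors as `4(ξ−x)(ξ−y)(ξ−z)`, and the Vieta
relations hold. -/
theorem burnside_vieta (g₂ g₃ x y z x' y' z' : ℂ)
    (hx : x'^2 = 4*x^3 - g₂*x - g₃)
    (hy : y'^2 = 4*y^3 - g₂*y - g₃)
    (hz : z'^2 = 4*z^3 - g₂*z - g₃)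
    (hxy : x ≠ y) (hyz : y ≠ z) (hxz : x ≠ z)
    (A B : ℂ)
    (hA : A = (x' - y')/(x - y))
    (hB : B = (x*y' - y*x')/(x - y))
    (hlin : z' = A*z + B) :
    (∀ ξ : ℂ, 4*ξ^3 - g₂*ξ - g₃ - (A*ξ + B)^2 = 4*(ξ - x)*(ξ - y)*(ξ - z)) ∧
    x + y + z = A^2/4 ∧
    x*y + y*z + z*x + g₂/4 = -(A*B)/2 ∧
    x*y*z - g₃/4 = B^2/4 := by
  have hx' : x' = A * x + B := by rw [hA, hB, secant_eval_left hxy]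
  have hy' : y' = A * y + B := by rw [hA, hB, secant_eval_right hxy]
  have root : ∀ ξ ξ' : ℂ, ξ' ^ 2 = 4 * ξ ^ 3 - g₂ * ξ - g₃ → ξ' = A * ξ + B →
      4 * ξ ^ 3 + (-A ^ 2) * ξ ^ 2 + (-(g₂ + 2 * A * B)) * ξ + (-(g₃ + B ^ 2)) = 0 := by
    rintro ξ _ h rfl
    linear_combination -h
  obtain ⟨h₂, h₁, h₀⟩ := cubic_vieta_of_roots hxy hxz hyz
    (root x x' hx hx') (root y y' hy hy') (root z z' hz hlin)
  refine ⟨fun ξ => ?_, by linear_combination h₂ / 4, by linear_combination -h₁ / 4,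
    by linear_combination h₀ / 4⟩
  linear_combination ξ ^ 2 * h₂ + ξ * h₁ + h₀
end

section
/- For all a, b, c ∈ ℂ, set f(t) = t³ + at² + bt + c. Viewing the generalized Kontsevich polynomial D_{a,b,c}(x,y,z) as a quadratic in z with coefficients A(x,y) = (x−y)², B(x,y) = −2(2a·xy + (x+y)(xy+b) + 2c), C(x,y) = (xy−b)² − 4c(x+y+a), its discriminant in z splits: B(x,y)² − 4A(x,y)C(x,y) = 16·f(x)·f(y) for all x,y ∈ ℂ. By the symmetry of D_{a,b,c}, the analogous statements hold for the discriminants in x and in y: disc_x D_{a,b,c}(·,y,z) = 16·f(y)·f(z) and disc_y D_{a,b,c}(x,·,z) = 16·f(z)·f(x). -/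
theorem kontsevich_discriminant_eq {R : Type*} [CommRing R] (a b c x y : R) :
    (-2*(2*a*x*y + (x + y)*(x*y + b) + 2*c))^2
        - 4*(x - y)^2*((x*y - b)^2 - 4*c*(x + y + a)) =
      16*(x^3 + a*x^2 + b*x + c)*(y^3 + a*y^2 + b*y + c) := by
  ring

/-- The generalized Kontsevich polynomial is strongly
discriminantly separated: its discriminant in each variable splits as
`16·f(·)·f(·)` with `f(t) = t³ + at² + bt + c`. -/
theorem kontsevich_discriminant_splits (a b c : ℂ) :
    (∀ x y : ℂ,
      (-2*(2*a*x*y + (x + y)*(x*y + b) + 2*c))^2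
        - 4*(x - y)^2*((x*y - b)^2 - 4*c*(x + y + a)) =
        16*(x^3 + a*x^2 + b*x + c)*(y^3 + a*y^2 + b*y + c)) ∧
    (∀ y z : ℂ,
      (-2*(2*a*y*z + (y + z)*(y*z + b) + 2*c))^2
        - 4*(y - z)^2*((y*z - b)^2 - 4*c*(y + z + a)) =
        16*(y^3 + a*y^2 + b*y + c)*(z^3 + a*z^2 + b*z + c)) ∧
    (∀ z x : ℂ,
      (-2*(2*a*z*x + (z + x)*(z*x + b) + 2*c))^2
        - 4*(z - x)^2*((z*x - b)^2 - 4*c*(z + x + a)) =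
        16*(z^3 + a*z^2 + b*z + c)*(x^3 + a*x^2 + b*x + c)) :=
  ⟨kontsevich_discriminant_eq a b c, kontsevich_discriminant_eq a b c,
    kontsevich_discriminant_eq a b c⟩
end

section
/- Let S(x,y,z) be a polynomial over ℂ, symmetric in x, y, z and of degree at most 2 in each variable, written as S = A(x,y)z² + B(x,y)z + C(x,y). Suppose (i) there exists a one-variable polynomial f over ℂ such that B(x,y)² − 4A(x,y)C(x,y) = 16·f(x)·f(y) for all x, y ∈ ℂ (the discriminant of S in z splits), and (ii) S(x,0,z) = (x−z)² for all x, z ∈ ℂ (the formal 2-group identity property). Then there exist a₁, a₂, a₃ ∈ ℂ such that S(x,y,z) = (x+y+z − a₂xyz)² − 4(1 + a₃xyz)(xy+yz+zx + a₁xyz) for all x,y,z ∈ ℂ, i.e. S is a Buchstaber polynomial. -/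
/-!
Subtracting `x² + y² + z² - 2(xy + yz + zx)`, which carries the identity property, leaves a
symmetric function that is quadratic in each variable and vanishes on the coordinate planes;
interpolating it at `±1` in each variable shows that it is `xyz (p + q e₁ + r e₂ + s e₃)`.
The discriminant in `z` is then `g(x) g(y) + (q² - pr - 4s) (xy(x - y))²` with
`g(t) = 4t - pt² - 2qt³ - rt⁴`. On the diagonal the splitting gives `16 f² = g²` as polynomials,
so `4f = ±g`, and the remaining term must vanish. The relation `q² = pr + 4s` is exactly the
Buchstaber form with `a₁ = -p/4`, `a₂ = -q/2`, `a₃ = -r/4`.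
-/

open MvPolynomial

namespace MvPolynomial.IsSymmetric

variable {R : Type*} [CommSemiring R]

theorem eval_comp_perm {σ : Type*} {φ : MvPolynomial σ R} (hφ : φ.IsSymmetric) (v : σ → R)
    (e : Equiv.Perm σ) : eval (v ∘ e) φ = eval v φ := by
  rw [← eval_rename, hφ e]

variable {φ : MvPolynomial (Fin 3) R}

theorem eval_swap_left (hφ : φ.IsSymmetric) (a b c : R) :
    eval ![a, b, c] φ = eval ![b, a, c] φ := by
  have hswap : ![b, a, c] ∘ Equiv.swap (0 : Fin 3) 1 = ![a, b, c] := by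
    funext i
    fin_cases i <;> rfl
  rw [← hswap, hφ.eval_comp_perm]

theorem eval_swap_right (hφ : φ.IsSymmetric) (a b c : R) :
    eval ![a, b, c] φ = eval ![a, c, b] φ := by
  have hswap : ![a, c, b] ∘ Equiv.swap (1 : Fin 3) 2 = ![a, b, c] := by
    funext i
    fin_cases i <;> rfl
  rw [← hswap, hφ.eval_comp_perm]

end MvPolynomial.IsSymmetric

section QuadraticFunctions

variable {K : Type*} [Field K] [CharZero K]

theorem quadratic_coeffs_eq {a b c a' b' c' : K}
    (h : ∀ z : K, a * z ^ 2 + b * z + c = a' * z ^ 2 + b' * z + c') :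
    a = a' ∧ b = b' ∧ c = c' := by
  have h0 := h 0
  have h1 := h 1
  have h2 := h (-1)
  refine ⟨?_, ?_, ?_⟩
  · linear_combination (h1 + h2) / 2 - h0
  · linear_combination (h1 - h2) / 2
  · linear_combination h0

theorem quadratic_eq_interpolation_of_map_zero {g : K → K} {a b c : K}
    (hg : ∀ w, g w = a * w ^ 2 + b * w + c) (h0 : g 0 = 0) (w : K) :
    g w = g 1 * (w * (w + 1) / 2) + g (-1) * (w * (w - 1) / 2) := by
  rw [hg 0] at h0
  rw [hg w, hg 1, hg (-1)]
  linear_combination (1 - w ^ 2) * h0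

theorem symmetric_vanishing_normal_form {G : K → K → K → K}
    (hG12 : ∀ a b c, G a b c = G b a c) (hG23 : ∀ a b c, G a b c = G a c b)
    (hG : ∀ a b w, G a b w = G a b 1 * (w * (w + 1) / 2) + G a b (-1) * (w * (w - 1) / 2)) :
    ∃ p q r s : K, ∀ x y z : K,
      G x y z =
        x * y * z * (p + q * (x + y + z) + r * (x * y + y * z + z * x) + s * (x * y * z)) := by
  -- `G` is the interpolation of its values on `{1, -1}³`, which symmetry reduces to four.
  have hrot : ∀ a b c, G a b c = G c a b := fun a b c => (hG23 a b c).trans (hG12 a c b)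
  have e₁ : G 1 (-1) 1 = G 1 1 (-1) := hG23 _ _ _
  have e₂ : G (-1) 1 1 = G 1 1 (-1) := (hrot _ _ _).trans e₁
  have e₃ : G (-1) 1 (-1) = G 1 (-1) (-1) := hG12 _ _ _
  have e₄ : G (-1) (-1) 1 = G 1 (-1) (-1) := hrot _ _ _
  refine ⟨(G 1 1 1 - 3 * G 1 1 (-1) + 3 * G 1 (-1) (-1) - G (-1) (-1) (-1)) / 8,
    (G 1 1 1 - G 1 1 (-1) - G 1 (-1) (-1) + G (-1) (-1) (-1)) / 8,
    (G 1 1 1 + G 1 1 (-1) - G 1 (-1) (-1) - G (-1) (-1) (-1)) / 8,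
    (G 1 1 1 + 3 * G 1 1 (-1) + 3 * G 1 (-1) (-1) + G (-1) (-1) (-1)) / 8, fun x y z => ?_⟩
  rw [hG x y z, hrot x y 1, hrot x y (-1), hG 1 x y, hG (-1) x y,
    hG23 1 x 1, hG23 1 x (-1), hG23 (-1) x 1, hG23 (-1) x (-1),
    hG 1 1 x, hG 1 (-1) x, hG (-1) 1 x, hG (-1) (-1) x, e₁, e₂, e₃, e₄]
  ring

theorem symmetric_quadratic_normal_form {F : K → K → K → K}
    (hF12 : ∀ a b c, F a b c = F b a c) (hF23 : ∀ a b c, F a b c = F a c b)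
    {A B C : K → K → K}
    (hquad : ∀ x y z, F x y z = A x y * z ^ 2 + B x y * z + C x y)
    (hid : ∀ x z, F x 0 z = (x - z) ^ 2) :
    ∃ p q r s : K, ∀ x y z : K, F x y z = x ^ 2 + y ^ 2 + z ^ 2 - 2 * (x * y + y * z + z * x)
      + x * y * z * (p + q * (x + y + z) + r * (x * y + y * z + z * x) + s * (x * y * z)) := by
  set G : K → K → K → K :=
    fun x y z => F x y z - (x ^ 2 + y ^ 2 + z ^ 2 - 2 * (x * y + y * z + z * x))
  have hG12 : ∀ a b c, G a b c = G b a c := fun a b c => by simp only [G, hF12 a b c]; ring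
  have hG23 : ∀ a b c, G a b c = G a c b := fun a b c => by simp only [G, hF23 a b c]; ring
  have hG : ∀ a b w, G a b w = G a b 1 * (w * (w + 1) / 2) + G a b (-1) * (w * (w - 1) / 2) := by
    intro a b
    refine quadratic_eq_interpolation_of_map_zero (a := A a b - 1) (b := B a b + 2 * (a + b))
      (c := C a b - (a - b) ^ 2) (fun w => by simp only [G, hquad]; ring) ?_
    simp only [G, hF23 a b 0, hid]
    ring
  obtain ⟨p, q, r, s, hnf⟩ := symmetric_vanishing_normal_form hG12 hG23 hG
  exact ⟨p, q, r, s, fun x y z => by linear_combination hnf x y z⟩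

theorem discr_eq_of_normal_form {F : K → K → K → K} {A B C : K → K → K} {p q r s : K}
    (hquad : ∀ x y z, F x y z = A x y * z ^ 2 + B x y * z + C x y)
    (hnf : ∀ x y z : K, F x y z = x ^ 2 + y ^ 2 + z ^ 2 - 2 * (x * y + y * z + z * x)
      + x * y * z * (p + q * (x + y + z) + r * (x * y + y * z + z * x) + s * (x * y * z)))
    (x y : K) :
    B x y ^ 2 - 4 * A x y * C x y =
      (4 * x - p * x ^ 2 - 2 * q * x ^ 3 - r * x ^ 4) *
          (4 * y - p * y ^ 2 - 2 * q * y ^ 3 - r * y ^ 4)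
        + (q ^ 2 - p * r - 4 * s) * (x * y * (x - y)) ^ 2 := by
  obtain ⟨hA, hB, hC⟩ := quadratic_coeffs_eq
    (a' := 1 + q * x * y + r * x * y * (x + y) + s * (x * y) ^ 2)
    (b' := -2 * (x + y) + p * x * y + q * x * y * (x + y) + r * (x * y) ^ 2) (c' := (x - y) ^ 2)
    fun z => by rw [← hquad x y, hnf]; ring
  rw [hA, hB, hC]
  ring

end QuadraticFunctions

namespace Polynomial

variable {R : Type*} [CommRing R] [IsDomain R]

theorem eval_mul_eval_eq_of_sq_eval_eq [Infinite R] {f g : R[X]}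
    (h : ∀ x, f.eval x ^ 2 = g.eval x ^ 2) (x y : R) :
    f.eval x * f.eval y = g.eval x * g.eval y := by
  have hfg : (f - g) * (f + g) = 0 :=
    Polynomial.funext fun t => by
      simp only [eval_mul, eval_sub, eval_add, eval_zero]
      linear_combination h t
  rcases mul_eq_zero.mp hfg with hfg | hfg
  · rw [sub_eq_zero.mp hfg]
  · rw [eq_neg_of_add_eq_zero_left hfg, eval_neg, eval_neg]
    ring

theorem eq_zero_of_eval_mul_eval_eq_add [CharZero R] {f g : R[X]} {δ : R}
    (h : ∀ x y, f.eval x * f.eval y = g.eval x * g.eval y + δ * (x * y * (x - y)) ^ 2) :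
    δ = 0 := by
  have hfg := eval_mul_eval_eq_of_sq_eval_eq (f := f) (g := g)
    (fun x => by linear_combination h x x) (1 : R) 2
  have h4 : 4 * δ = 0 := by linear_combination hfg - h 1 2
  simpa using h4

end Polynomial

theorem split_discriminant_is_buchstaber_general
    (S : MvPolynomial (Fin 3) ℂ)
    (hsym : S.IsSymmetric)
    (A B C : ℂ → ℂ → ℂ)
    (hABC : ∀ x y z : ℂ,
      MvPolynomial.eval ![x, y, z] S = A x y * z^2 + B x y * z + C x y)
    (f : Polynomial ℂ)
    (hdisc : ∀ x y : ℂ,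
      (B x y)^2 - 4 * A x y * C x y = 16 * f.eval x * f.eval y)
    (hid : ∀ x z : ℂ, MvPolynomial.eval ![x, 0, z] S = (x - z)^2) :
    ∃ a₁ a₂ a₃ : ℂ, ∀ x y z : ℂ,
      MvPolynomial.eval ![x, y, z] S =
        (x + y + z - a₂*x*y*z)^2
          - 4*(1 + a₃*x*y*z)*(x*y + y*z + z*x + a₁*x*y*z) := by
  obtain ⟨p, q, r, s, hnf⟩ := symmetric_quadratic_normal_form
    (F := fun x y z => eval ![x, y, z] S) hsym.eval_swap_left hsym.eval_swap_right hABC hid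
  have hδ : q ^ 2 - p * r - 4 * s = 0 := by
    refine Polynomial.eq_zero_of_eval_mul_eval_eq_add (f := Polynomial.C 4 * f)
      (g := Polynomial.C 4 * .X - .C p * .X ^ 2 - .C (2 * q) * .X ^ 3 - .C r * .X ^ 4) fun x y => ?_
    simp only [Polynomial.eval_mul, Polynomial.eval_sub, Polynomial.eval_C, Polynomial.eval_X,
      Polynomial.eval_pow]
    linear_combination (hdisc x y).symm.trans (discr_eq_of_normal_form hABC hnf x y)
  exact ⟨-p / 4, -q / 2, -r / 4, fun x y z => by
    linear_combination hnf x y z - (x ^ 2 * y ^ 2 * z ^ 2 / 4) * hδ⟩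

/-- A symmetric polynomial in three variables, of degree at most 2
in each variable, whose discriminant in the third variable splits as
`16·f(x)·f(y)` and which satisfies the formal 2-group identity property
`S(x,0,z) = (x−z)²`, is a Buchstaber polynomial. -/
theorem split_discriminant_is_buchstaber
    (S : MvPolynomial (Fin 3) ℂ)
    (hsym : S.IsSymmetric)
    (hdeg : ∀ i : Fin 3, S.degreeOf i ≤ 2)
    (A B C : ℂ → ℂ → ℂ)
    (hABC : ∀ x y z : ℂ,
      MvPolynomial.eval ![x, y, z] S = A x y * z^2 + B x y * z + C x y)
    (f : Polynomial ℂ)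
    (hdisc : ∀ x y : ℂ,
      (B x y)^2 - 4 * A x y * C x y = 16 * f.eval x * f.eval y)
    (hid : ∀ x z : ℂ, MvPolynomial.eval ![x, 0, z] S = (x - z)^2) :
    ∃ a₁ a₂ a₃ : ℂ, ∀ x y z : ℂ,
      MvPolynomial.eval ![x, y, z] S =
        (x + y + z - a₂*x*y*z)^2
          - 4*(1 + a₃*x*y*z)*(x*y + y*z + z*x + a₁*x*y*z) :=
  split_discriminant_is_buchstaber_general S hsym A B C hABC f hdisc hid
end

section
/- Let a, b, c, x, y, z ∈ ℂ, set σ₁ = x+y+z, σ₂ = xy+yz+zx, σ₃ = xyz, f(t) = t³ + at² + bt + c, and q(t) = (a+σ₁)t² + (b−σ₂)t + (c+σ₃). Then (1) a point (t,u) ∈ ℂ² lies on both curves u² = f(t) and u² = (t−x)(t−y)(t−z) if and only if u² = f(t) and q(t) = 0; (2) assume additionally that a + σ₁ ≠ 0 and that f and q have no common root; then the set of common points of the two curves in ℂ² has exactly two elements if and only if the discriminant (b−σ₂)² − 4(a+σ₁)(c+σ₃) of q vanishes, i.e. if and only if D_{a,b,c}(x,y,z) = 0. -/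
/-!
Subtracting the two cubics leaves the quadratic `q = f - (t - x)(t - y)(t - z)`, so a common
point is a point of `u² = f(t)` over a root of `q`. Over a root `t` with `f(t) ≠ 0` there are
exactly two such points `(t, ±√f(t))`, hence the intersection has twice as many points as `q`
has roots, and a quadratic with nonzero leading coefficient has a single root exactly when its
discriminant vanishes.
-/

theorem cubic_sub_prod_sub_eq {R : Type*} [CommRing R] (a b c x y z t : R) :
    t^3 + a*t^2 + b*t + c - (t - x)*(t - y)*(t - z) =
      (a + (x + y + z))*t^2 + (b - (x*y + y*z + z*x))*t + (c + x*y*z) := by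
  ring

theorem sq_eq_cubic_and_sq_eq_prod_sub_iff {R : Type*} [CommRing R] (a b c x y z t u : R) :
    (u^2 = t^3 + a*t^2 + b*t + c ∧ u^2 = (t - x)*(t - y)*(t - z)) ↔
      (u^2 = t^3 + a*t^2 + b*t + c ∧
        (a + (x + y + z))*t^2 + (b - (x*y + y*z + z*x))*t + (c + x*y*z) = 0) :=
  and_congr_right fun hu => by rw [hu, ← cubic_sub_prod_sub_eq, sub_eq_zero]

section IsAlgClosed

variable {K : Type*} [Field K] [IsAlgClosed K] [NeZero (2 : K)]

theorem ncard_setOf_sq_eq_and_mem (f : K → K) {S : Set K} (hf : ∀ t ∈ S, f t ≠ 0) :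
    {p : K × K | p.2 ^ 2 = f p.1 ∧ p.1 ∈ S}.ncard = S.ncard * 2 := by
  choose r hr using fun t => IsAlgClosed.exists_pow_nat_eq (f t) two_pos
  have hr0 : ∀ t ∈ S, r t ≠ 0 := fun t ht h0 => hf t ht (by rw [← hr, h0, zero_pow two_ne_zero])
  have himage : {p : K × K | p.2 ^ 2 = f p.1 ∧ p.1 ∈ S} =
      (fun q : K × K => (q.1, q.2 * r q.1)) '' (S ×ˢ {1, -1}) := by
    ext ⟨t, u⟩
    simp only [Set.mem_ofPred_eq, Set.mem_image, Set.mem_prod, Set.mem_insert_iff,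
      Set.mem_singleton_iff, Prod.exists, Prod.mk.injEq]
    constructor
    · rintro ⟨hu, ht⟩
      rcases sq_eq_sq_iff_eq_or_eq_neg.mp (hu.trans (hr t).symm) with rfl | rfl
      · exact ⟨t, 1, ⟨ht, .inl rfl⟩, rfl, one_mul _⟩
      · exact ⟨t, -1, ⟨ht, .inr rfl⟩, rfl, neg_one_mul _⟩
    · rintro ⟨t, ε, ⟨ht, rfl | rfl⟩, rfl, rfl⟩ <;> simp [ht, hr]
  have hinj : Set.InjOn (fun q : K × K => (q.1, q.2 * r q.1)) (S ×ˢ {1, -1}) := by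
    rintro ⟨t, ε⟩ ⟨ht, -⟩ ⟨t', ε'⟩ - h
    simp only [Prod.mk.injEq] at h
    obtain ⟨rfl, h⟩ := h
    exact Prod.ext rfl (mul_right_cancel₀ (hr0 t ht) h)
  have hsign : (1 : K) ≠ -1 := fun h => two_ne_zero (by linear_combination h : (2 : K) = 0)
  rw [himage, hinj.ncard_image, Set.ncard_prod, Set.ncard_pair hsign]

theorem ncard_setOf_quadratic_eq_zero_eq_one_iff {a b c : K} (ha : a ≠ 0) :
    {x : K | a * x ^ 2 + b * x + c = 0}.ncard = 1 ↔ discrim a b c = 0 := by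
  by_cases hd : discrim a b c = 0
  · have hroots : {x : K | a * x ^ 2 + b * x + c = 0} = {-b / (2 * a)} :=
      Set.ext fun x => by simpa [sq] using quadratic_eq_zero_iff_of_discrim_eq_zero ha hd x
    simp [hroots, hd]
  · obtain ⟨s, hs⟩ := IsAlgClosed.exists_pow_nat_eq (discrim a b c) two_pos
    have hroots : {x : K | a * x ^ 2 + b * x + c = 0} = {(-b + s) / (2 * a), (-b - s) / (2 * a)} :=
      Set.ext fun x => by simpa [sq] using quadratic_eq_zero_iff ha (by rw [← hs, sq]) x
    have hne : (-b + s) / (2 * a) ≠ (-b - s) / (2 * a) := by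
      rw [Ne, div_left_inj' (mul_ne_zero two_ne_zero ha)]
      intro h
      have h2s : 2 * s = 0 := by linear_combination h
      exact hd (by rw [← hs, (mul_eq_zero.mp h2s).resolve_left two_ne_zero, zero_pow two_ne_zero])
    simp [hroots, Set.ncard_pair hne, hd]

end IsAlgClosed

/-- Intersection of the two elliptic curves
`u² = t³ + at² + bt + c` and `u² = (t−x)(t−y)(t−z)`: the common points are
governed by the quadratic `q(t) = (a+σ₁)t² + (b−σ₂)t + (c+σ₃)`, and (under
genericity assumptions) the intersection has exactly two points iff the
Kontsevich polynomial vanishes. -/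
theorem curve_intersection_kontsevich (a b c x y z : ℂ) :
    (∀ t u : ℂ,
      (u^2 = t^3 + a*t^2 + b*t + c ∧ u^2 = (t - x)*(t - y)*(t - z)) ↔
      (u^2 = t^3 + a*t^2 + b*t + c ∧
        (a + (x + y + z))*t^2 + (b - (x*y + y*z + z*x))*t + (c + x*y*z) = 0)) ∧
    ((a + (x + y + z) ≠ 0) →
      (∀ t : ℂ, ¬(t^3 + a*t^2 + b*t + c = 0 ∧
        (a + (x + y + z))*t^2 + (b - (x*y + y*z + z*x))*t + (c + x*y*z) = 0)) →
      ({p : ℂ × ℂ | p.2^2 = p.1^3 + a*p.1^2 + b*p.1 + c ∧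
          p.2^2 = (p.1 - x)*(p.1 - y)*(p.1 - z)}.ncard = 2 ↔
        (b - (x*y + y*z + z*x))^2 - 4*(a + (x + y + z))*(c + x*y*z) = 0)) := by
  refine ⟨sq_eq_cubic_and_sq_eq_prod_sub_iff a b c x y z, fun hA hcoprime => ?_⟩
  set S := {t : ℂ | (a + (x + y + z))*t^2 + (b - (x*y + y*z + z*x))*t + (c + x*y*z) = 0}
  have hset : {p : ℂ × ℂ | p.2^2 = p.1^3 + a*p.1^2 + b*p.1 + c ∧
      p.2^2 = (p.1 - x)*(p.1 - y)*(p.1 - z)} =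
      {p : ℂ × ℂ | p.2^2 = p.1^3 + a*p.1^2 + b*p.1 + c ∧ p.1 ∈ S} :=
    Set.ext fun p => sq_eq_cubic_and_sq_eq_prod_sub_iff a b c x y z p.1 p.2
  rw [hset, ncard_setOf_sq_eq_and_mem _ fun t (ht : t ∈ S) hf => hcoprime t ⟨hf, ht⟩,
    Nat.mul_eq_right two_ne_zero]
  exact ncard_setOf_quadratic_eq_zero_eq_one_iff hA
end

section
/- Let a, b, c, x ∈ ℂ. If x³ + ax² + bx + c = 0 and x⁴ − 2bx² − 8cx + b² − 4ac = 0, then Δ(a,b,c) = a²b² − 4b³ − 4a³c + 18abc − 27c² = 0. (Equivalently: if the cubic discriminant Δ(a,b,c) is nonzero, the coefficients A_{a,b,c}(x,x) = 0, B_{a,b,c}(x,x) = −2(x³+ax²+bx+c) and C_{a,b,c}(x,x) = x⁴−2bx²−8cx+b²−4ac of the Kontsevich quadratic cannot vanish simultaneously.) -/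
/-! With `p = t³ + at² + bt + c`, the quartic equals `p'(t)² − 4(2t + a) p(t)`. Hence a common
root `x` of the cubic and the quartic is also a root of `p'`, i.e. a double root of `p`, and the
discriminant of a cubic with a double root vanishes. -/

section CommRing

variable {R : Type*} [CommRing R]

theorem kontsevich_quartic_eq_sq_derivative_sub (a b c x : R) :
    x^4 - 2*b*x^2 - 8*c*x + b^2 - 4*a*c
      = (3*x^2 + 2*a*x + b)^2 - 4*(2*x + a)*(x^3 + a*x^2 + b*x + c) := by
  ring

theorem cubic_discr_eq_zero_of_double_root {a b c x : R}
    (hp : x^3 + a*x^2 + b*x + c = 0) (hp' : 3*x^2 + 2*a*x + b = 0) :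
    a^2*b^2 - 4*b^3 - 4*a^3*c + 18*a*b*c - 27*c^2 = 0 := by
  obtain rfl : b = -3*x^2 - 2*a*x := by linear_combination hp'
  obtain rfl : c = 2*x^3 + a*x^2 := by linear_combination hp - x*hp'
  ring

theorem cubic_derivative_eq_zero_of_kontsevich_quartic_eq_zero [IsReduced R] {a b c x : R}
    (hp : x^3 + a*x^2 + b*x + c = 0) (hq : x^4 - 2*b*x^2 - 8*c*x + b^2 - 4*a*c = 0) :
    3*x^2 + 2*a*x + b = 0 := by
  refine IsReduced.eq_zero _ ⟨2, ?_⟩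
  rw [← hq, kontsevich_quartic_eq_sq_derivative_sub, hp]
  ring

end CommRing

/-- If `x³ + ax² + bx + c = 0` and
`x⁴ − 2bx² − 8cx + b² − 4ac = 0`, then the cubic discriminant
`a²b² − 4b³ − 4a³c + 18abc − 27c²` vanishes. -/
theorem common_root_implies_discriminant_zero (a b c x : ℂ)
    (h1 : x^3 + a*x^2 + b*x + c = 0)
    (h2 : x^4 - 2*b*x^2 - 8*c*x + b^2 - 4*a*c = 0) :
    a^2*b^2 - 4*b^3 - 4*a^3*c + 18*a*b*c - 27*c^2 = 0 :=
  cubic_discr_eq_zero_of_double_root h1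
    (cubic_derivative_eq_zero_of_kontsevich_quartic_eq_zero h1 h2)
end

section
/- For all a, b, c ∈ ℂ and all nonzero x, y, z ∈ ℂ: (xyz)² · D_{a,b,c}(1/x, 1/y, 1/z) = B_{a,b,c}(x,y,z), where D_{a,b,c} is the generalized Kontsevich polynomial and B_{a,b,c} is the Buchstaber polynomial with parameters a₁ = a, a₂ = b, a₃ = c. -/
/-!
Both polynomials depend on `x, y, z` only through the elementary symmetric functions, and inverting
the variables acts on these by `σ₁ ↦ σ₂ / σ₃`, `σ₂ ↦ σ₁ / σ₃`, `σ₃ ↦ 1 / σ₃`. After this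
substitution, clearing the denominator `σ₃²` in `D_{a,b,c}` gives `B_{a,b,c}` term by term:
`σ₃² (σ₁/σ₃ - b)² = (σ₁ - b σ₃)²` and `σ₃² (1/σ₃ + c)(σ₂/σ₃ + a) = (1 + c σ₃)(σ₂ + a σ₃)`.
-/

section SymmetricForms

def kontsevichForm {R : Type*} [CommRing R] (a b c s₁ s₂ s₃ : R) : R :=
  (s₂ - b) ^ 2 - 4 * (s₃ + c) * (s₁ + a)

def buchstaberForm {R : Type*} [CommRing R] (a₁ a₂ a₃ s₁ s₂ s₃ : R) : R :=
  (s₁ - a₂ * s₃) ^ 2 - 4 * (1 + a₃ * s₃) * (s₂ + a₁ * s₃)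

variable {K : Type*} [Field K]

theorem sq_mul_kontsevichForm_inversion (a b c s₁ s₂ s₃ : K) (h : s₃ ≠ 0) :
    s₃ ^ 2 * kontsevichForm a b c (s₂ / s₃) (s₁ / s₃) s₃⁻¹ = buchstaberForm a b c s₁ s₂ s₃ := by
  unfold kontsevichForm buchstaberForm
  field_simp

theorem inv_add_inv_add_inv {x y z : K} (hx : x ≠ 0) (hy : y ≠ 0) (hz : z ≠ 0) :
    x⁻¹ + y⁻¹ + z⁻¹ = (x * y + y * z + z * x) / (x * y * z) := by
  field_simp
  ring

theorem inv_mul_inv_add_inv_mul_inv_add_inv_mul_inv {x y z : K} (hx : x ≠ 0) (hy : y ≠ 0)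
    (hz : z ≠ 0) :
    x⁻¹ * y⁻¹ + y⁻¹ * z⁻¹ + z⁻¹ * x⁻¹ = (x + y + z) / (x * y * z) := by
  field_simp
  ring

end SymmetricForms

/-- Buchstaber–Kontsevich correspondence:
`(xyz)²·D_{a,b,c}(1/x, 1/y, 1/z) = B_{a,b,c}(x,y,z)` for nonzero `x,y,z`. -/
theorem buchstaber_kontsevich_correspondence (a b c x y z : ℂ)
    (hx : x ≠ 0) (hy : y ≠ 0) (hz : z ≠ 0) :
    (x*y*z)^2 *
      ((1/x - 1/y)^2*(1/z)^2
        - 2*(2*a*(1/x)*(1/y) + (1/x + 1/y)*((1/x)*(1/y) + b) + 2*c)*(1/z)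
        + ((1/x)*(1/y) - b)^2 - 4*c*(1/x + 1/y + a)) =
    (x + y + z - b*x*y*z)^2
      - 4*(1 + c*x*y*z)*(x*y + y*z + z*x + a*x*y*z) := by
  have hxyz : x * y * z ≠ 0 := mul_ne_zero (mul_ne_zero hx hy) hz
  have hD : (1/x - 1/y)^2*(1/z)^2
        - 2*(2*a*(1/x)*(1/y) + (1/x + 1/y)*((1/x)*(1/y) + b) + 2*c)*(1/z)
        + ((1/x)*(1/y) - b)^2 - 4*c*(1/x + 1/y + a) =
      kontsevichForm a b c (x⁻¹ + y⁻¹ + z⁻¹) (x⁻¹ * y⁻¹ + y⁻¹ * z⁻¹ + z⁻¹ * x⁻¹)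
        (x⁻¹ * y⁻¹ * z⁻¹) := by
    unfold kontsevichForm
    ring
  have hB : (x + y + z - b*x*y*z)^2 - 4*(1 + c*x*y*z)*(x*y + y*z + z*x + a*x*y*z) =
      buchstaberForm a b c (x + y + z) (x * y + y * z + z * x) (x * y * z) := by
    unfold buchstaberForm
    ring
  rw [hD, hB, inv_add_inv_add_inv hx hy hz, inv_mul_inv_add_inv_mul_inv_add_inv_mul_inv hx hy hz,
    ← mul_inv, ← mul_inv]
  exact sq_mul_kontsevichForm_inversion a b c _ _ _ hxyz
end

section
/- For all a, b, c, x, y, z ∈ ℂ, writing σ₁ = x+y+z, σ₂ = xy+yz+zx, σ₃ = xyz, the polynomial in t given by xyz·(t³ + at² + bt + c) − (xt−1)(yt−1)(zt−1) equals the quadratic (a·σ₃ + σ₂)t² + (b·σ₃ − σ₁)t + (c·σ₃ + 1), and its discriminant equals the Buchstaber polynomial: (b·σ₃ − σ₁)² − 4(a·σ₃ + σ₂)(c·σ₃ + 1) = B_{a,b,c}(x,y,z). Thus the Buchstaber polynomial is itself a discriminant-type polynomial. -/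
section

variable {R : Type*} [CommRing R]

def buchstaber (a₁ a₂ a₃ x y z : R) : R :=
  (x + y + z - a₂*x*y*z)^2 - 4*(1 + a₃*x*y*z)*(x*y + y*z + z*x + a₁*x*y*z)

theorem mul_cubic_sub_prod_linear (a b c x y z t : R) :
    x*y*z*(t^3 + a*t^2 + b*t + c) - (x*t - 1)*(y*t - 1)*(z*t - 1) =
      (a*(x*y*z) + (x*y + y*z + z*x))*t^2
        + (b*(x*y*z) - (x + y + z))*t + (c*(x*y*z) + 1) := by
  ring

theorem discrim_eq_buchstaber (a b c x y z : R) :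
    discrim (a*(x*y*z) + (x*y + y*z + z*x)) (b*(x*y*z) - (x + y + z)) (c*(x*y*z) + 1) =
      buchstaber a b c x y z := by
  rw [discrim, buchstaber]
  ring

end

/-- `xyz·(t³ + at² + bt + c) − (xt−1)(yt−1)(zt−1)` is the
quadratic `(aσ₃+σ₂)t² + (bσ₃−σ₁)t + (cσ₃+1)` and its discriminant is the
Buchstaber polynomial `B_{a,b,c}(x,y,z)`. -/
theorem buchstaber_is_discriminant (a b c x y z : ℂ) :
    (∀ t : ℂ,
      x*y*z*(t^3 + a*t^2 + b*t + c) - (x*t - 1)*(y*t - 1)*(z*t - 1) =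
        (a*(x*y*z) + (x*y + y*z + z*x))*t^2
          + (b*(x*y*z) - (x + y + z))*t + (c*(x*y*z) + 1)) ∧
    (b*(x*y*z) - (x + y + z))^2
      - 4*(a*(x*y*z) + (x*y + y*z + z*x))*(c*(x*y*z) + 1) =
    (x + y + z - b*x*y*z)^2
      - 4*(1 + c*x*y*z)*(x*y + y*z + z*x + a*x*y*z) :=
  ⟨mul_cubic_sub_prod_linear a b c x y z, discrim_eq_buchstaber a b c x y z⟩
end

section
/- Let x, y, z ∈ ℂ be nonzero and pairwise distinct, and define j(x,y,z) = 256·((x+y+z)² − 3(xy+yz+zx))³ / ((x−y)²(y−z)²(z−x)²) (the j-invariant of the elliptic curve u² = (t−x)(t−y)(t−z)). Then j(x,y,z) = j(−1/x, −1/y, −1/z) if and only if (xz − y²)(xy − z²)(x² − yz)(x²y + z²x + y²z − 3xyz)(x²z + y²x + yz² − 3xyz) = 0. -/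
/-!
The involution is a rescaling in disguise: `-1/x = -(1/xyz) · yz`, so
`σ(x, y, z) = -(1/xyz) · (yz, zx, xy)`, and `j` is homogeneous of degree `0`. Hence the
condition reads `j(x, y, z) = j(yz, zx, xy)`. The discriminant of `(yz, zx, xy)` is `(xyz)²`
times that of `(x, y, z)`, so clearing denominators leaves `(xyz)² I(x, y, z)³ = I(yz, zx, xy)³`
for the quadratic invariant `I`, and the difference of the two sides factors as the quintic
product.
-/

namespace RootTriple

section CommRing

variable {R : Type*} [CommRing R]

def quadInv (x y z : R) : R := (x + y + z)^2 - 3*(x*y + y*z + z*x)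

def discr (x y z : R) : R := (x - y)^2*(y - z)^2*(z - x)^2

theorem quadInv_mul_left (c x y z : R) : quadInv (c*x) (c*y) (c*z) = c^2 * quadInv x y z := by
  unfold quadInv; ring

theorem discr_mul_left (c x y z : R) : discr (c*x) (c*y) (c*z) = c^6 * discr x y z := by
  unfold discr; ring

theorem discr_pairwise_products (x y z : R) :
    discr (y*z) (z*x) (x*y) = (x*y*z)^2 * discr x y z := by
  unfold discr; ring

theorem quadInv_pairwise_products_cube_sub (x y z : R) :
    (x*y*z)^2 * quadInv x y z ^ 3 - quadInv (y*z) (z*x) (x*y) ^ 3 =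
      (x*z - y^2)*(x*y - z^2)*(x^2 - y*z)
        *(x^2*y + z^2*x + y^2*z - 3*x*y*z)
        *(x^2*z + y^2*x + y*z^2 - 3*x*y*z) := by
  unfold quadInv; ring

theorem discr_ne_zero [IsDomain R] {x y z : R} (hxy : x ≠ y) (hyz : y ≠ z) (hzx : z ≠ x) :
    discr x y z ≠ 0 := by
  unfold discr
  have := sub_ne_zero.mpr hxy
  have := sub_ne_zero.mpr hyz
  have := sub_ne_zero.mpr hzx
  positivity

end CommRing

section Field

variable {K : Type*} [Field K]

def jInvariant (x y z : K) : K := 256 * quadInv x y z ^ 3 / discr x y z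

theorem jInvariant_mul_left {c : K} (hc : c ≠ 0) (x y z : K) :
    jInvariant (c*x) (c*y) (c*z) = jInvariant x y z := by
  unfold jInvariant
  rw [quadInv_mul_left, discr_mul_left, mul_pow, ← pow_mul, mul_left_comm,
    mul_div_mul_left _ _ (pow_ne_zero _ hc)]

theorem jInvariant_neg_one_div {x y z : K} (hx : x ≠ 0) (hy : y ≠ 0) (hz : z ≠ 0) :
    jInvariant (-1/x) (-1/y) (-1/z) = jInvariant (y*z) (z*x) (x*y) := by
  have hscale : ∀ {u v w : K}, u ≠ 0 → v ≠ 0 → w ≠ 0 → -1/u = -1/(u*v*w) * (v*w) := by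
    intro u v w hu hv hw
    field_simp
  rw [hscale hx hy hz, hscale hy hz hx, hscale hz hx hy,
    show y*z*x = x*y*z by ring, show z*x*y = x*y*z by ring,
    jInvariant_mul_left (by simp [hx, hy, hz])]

theorem jInvariant_eq_neg_one_div_iff (h2 : (2 : K) ≠ 0) {x y z : K}
    (hx : x ≠ 0) (hy : y ≠ 0) (hz : z ≠ 0) (hxy : x ≠ y) (hyz : y ≠ z) (hzx : z ≠ x) :
    jInvariant x y z = jInvariant (-1/x) (-1/y) (-1/z) ↔
      (x*z - y^2)*(x*y - z^2)*(x^2 - y*z)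
        *(x^2*y + z^2*x + y^2*z - 3*x*y*z)
        *(x^2*z + y^2*x + y*z^2 - 3*x*y*z) = 0 := by
  have hΔ : discr x y z ≠ 0 := discr_ne_zero hxy hyz hzx
  have hΔ' : discr (y*z) (z*x) (x*y) ≠ 0 := by
    rw [discr_pairwise_products]
    exact mul_ne_zero (by simp [hx, hy, hz]) hΔ
  have h256 : (256 : K) * discr x y z ≠ 0 :=
    mul_ne_zero (by rw [show (256 : K) = 2^8 by norm_num]; exact pow_ne_zero 8 h2) hΔ
  rw [jInvariant_neg_one_div hx hy hz, jInvariant, jInvariant, div_eq_div_iff hΔ hΔ',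
    discr_pairwise_products, ← quadInv_pairwise_products_cube_sub, ← sub_eq_zero]
  rw [show 256 * quadInv x y z ^ 3 * ((x*y*z)^2 * discr x y z)
        - 256 * quadInv (y*z) (z*x) (x*y) ^ 3 * discr x y z
      = 256 * discr x y z
        * ((x*y*z)^2 * quadInv x y z ^ 3 - quadInv (y*z) (z*x) (x*y) ^ 3) by ring]
  exact mul_eq_zero.trans (or_iff_right h256)

end Field

end RootTriple

/-- For pairwise distinct nonzero `x,y,z`, the `j`-invariant of
`u² = (t−x)(t−y)(t−z)` is invariant under the Buchstaber–Kontsevich involution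
`(x,y,z) ↦ (−1/x,−1/y,−1/z)` iff a certain quintic locus vanishes. -/
theorem j_invariant_fixed_locus (x y z : ℂ)
    (hx : x ≠ 0) (hy : y ≠ 0) (hz : z ≠ 0)
    (hxy : x ≠ y) (hyz : y ≠ z) (hzx : z ≠ x) :
    (256*((x + y + z)^2 - 3*(x*y + y*z + z*x))^3 /
        ((x - y)^2*(y - z)^2*(z - x)^2) =
      256*(((-1/x) + (-1/y) + (-1/z))^2
          - 3*((-1/x)*(-1/y) + (-1/y)*(-1/z) + (-1/z)*(-1/x)))^3 /
        (((-1/x) - (-1/y))^2*((-1/y) - (-1/z))^2*((-1/z) - (-1/x))^2)) ↔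
    (x*z - y^2)*(x*y - z^2)*(x^2 - y*z)
      *(x^2*y + z^2*x + y^2*z - 3*x*y*z)
      *(x^2*z + y^2*x + y*z^2 - 3*x*y*z) = 0 :=
  RootTriple.jInvariant_eq_neg_one_div_iff two_ne_zero hx hy hz hxy hyz hzx
end
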